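/- arXiv:2406.00541 — 5 statements merged into one kernel-verified Lean document; each statement's English description precedes it below -/
import Mathlib

section
/- Let T be an operator on H = H₁ ⊕ H₂ with block matrix T = [[V, E],[0, X]] where V ∈ B(H₁) and E₀ ∈ B(H₂, H₁) are isometries with ran(E₀) ⊥ ran(V), E = √(1−q) E₀ with 0 < q < 1, and X = √q X₀ with X₀ ∈ B(H₂) an isometry. Then T is a 2-isometry. -/
/-!
With `E = √(1-q) E₀` and `X = √q X₀` one has `E*E + X*X = (1 - q) + q = I`, and `V*E = 0` by the
orthogonality of the ranges, so `T*T = I`: the block operator `T` is an isometry. Applying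
`‖T h‖ = ‖h‖` twice makes the defining expression `‖h‖² - 2‖Th‖² + ‖T²h‖²` of a 2-isometry vanish.
-/

open ContinuousLinearMap Filter

/-- The covariance of a bounded operator `T` on a complex Hilbert space:
`cov T = √‖T*T − I‖`. -/
noncomputable def cov {H : Type*} [NormedAddCommGroup H] [InnerProductSpace ℂ H]
    [CompleteSpace H] (T : H →L[ℂ] H) : ℝ :=
  Real.sqrt ‖adjoint T ∘L T - 1‖

open scoped InnerProductSpace

def IsTwoIsometry {E : Type*} [Norm E] (T : E → E) : Prop :=
  ∀ h, ‖h‖ ^ 2 - 2 * ‖T h‖ ^ 2 + ‖T (T h)‖ ^ 2 = 0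

theorem IsTwoIsometry.of_norm_map {E : Type*} [Norm E] {T : E → E}
    (hT : ∀ h, ‖T h‖ = ‖h‖) : IsTwoIsometry T := fun h => by
  rw [hT (T h), hT]
  ring

theorem WithLp.norm_toLp_add_of_inner_eq_zero {𝕜 H₁ H₂ K₁ K₂ : Type*} [RCLike 𝕜]
    [NormedAddCommGroup K₁] [InnerProductSpace 𝕜 K₁] [SeminormedAddCommGroup H₁]
    [SeminormedAddCommGroup H₂] [SeminormedAddCommGroup K₂]
    (V : H₁ → K₁) (E : H₂ → K₁) (X : H₂ → K₂)
    (hV : ∀ x, ‖V x‖ = ‖x‖) (hEX : ∀ y, ‖E y‖ ^ 2 + ‖X y‖ ^ 2 = ‖y‖ ^ 2)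
    (horth : ∀ x y, ⟪V x, E y⟫_𝕜 = 0) (x : H₁) (y : H₂) :
    ‖WithLp.toLp 2 (V x + E y, X y)‖ = ‖WithLp.toLp 2 (x, y)‖ := by
  refine (sq_eq_sq₀ (norm_nonneg _) (norm_nonneg _)).mp ?_
  simp only [WithLp.prod_norm_sq_eq_of_L2, WithLp.toLp_fst, WithLp.toLp_snd]
  rw [← hEX, ← hV x]
  linear_combination norm_add_sq_eq_norm_sq_add_norm_sq_of_inner_eq_zero _ _ (horth x y)

theorem sq_norm_sqrt_one_sub_smul_add_sq_norm_sqrt_smul {E F : Type*}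
    [SeminormedAddCommGroup E] [NormedSpace ℝ E] [SeminormedAddCommGroup F] [NormedSpace ℝ F]
    {q r : ℝ} (hq0 : 0 ≤ q) (hq1 : q ≤ 1) {u : E} {v : F} (hu : ‖u‖ = r) (hv : ‖v‖ = r) :
    ‖√(1 - q) • u‖ ^ 2 + ‖√q • v‖ ^ 2 = r ^ 2 := by
  rw [norm_smul, norm_smul, mul_pow, mul_pow, Real.norm_eq_abs, Real.norm_eq_abs, sq_abs, sq_abs,
    Real.sq_sqrt (by linarith), Real.sq_sqrt hq0, hu, hv]
  ring

open scoped InnerProductSpace in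
/-- An upper triangular block operator [[V, √(1−q)E₀],[0, √q X₀]] with V, E₀, X₀
isometries and ran E₀ ⊥ ran V is a 2-isometry. -/
theorem block_twoIsometry {H₁ H₂ : Type*} [NormedAddCommGroup H₁] [InnerProductSpace ℂ H₁]
    [CompleteSpace H₁] [NormedAddCommGroup H₂] [InnerProductSpace ℂ H₂] [CompleteSpace H₂]
    (V : H₁ →L[ℂ] H₁) (E₀ : H₂ →L[ℂ] H₁) (X₀ : H₂ →L[ℂ] H₂) (q : ℝ)
    (hq0 : 0 < q) (hq1 : q < 1)
    (hV : ∀ x : H₁, ‖V x‖ = ‖x‖) (hE : ∀ y : H₂, ‖E₀ y‖ = ‖y‖)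
    (hX : ∀ y : H₂, ‖X₀ y‖ = ‖y‖)
    (horth : ∀ (x : H₁) (y : H₂), ⟪V x, E₀ y⟫_ℂ = 0)
    (T : WithLp 2 (H₁ × H₂) →L[ℂ] WithLp 2 (H₁ × H₂))
    (hT : ∀ (x : H₁) (y : H₂),
      T ((WithLp.equiv 2 (H₁ × H₂)).symm (x, y)) =
        (WithLp.equiv 2 (H₁ × H₂)).symm
          (V x + Real.sqrt (1 - q) • E₀ y, Real.sqrt q • X₀ y)) :
    ∀ h, ‖h‖ ^ 2 - 2 * ‖T h‖ ^ 2 + ‖T (T h)‖ ^ 2 = 0 := by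
  have hEX : ∀ y, ‖√(1 - q) • E₀ y‖ ^ 2 + ‖√q • X₀ y‖ ^ 2 = ‖y‖ ^ 2 := fun y =>
    sq_norm_sqrt_one_sub_smul_add_sq_norm_sqrt_smul hq0.le hq1.le (hE y) (hX y)
  have horth' : ∀ x y, ⟪V x, √(1 - q) • E₀ y⟫_ℂ = 0 := fun x y => by
    rw [inner_smul_right_eq_smul, horth, smul_zero]
  exact IsTwoIsometry.of_norm_map fun h => (congrArg norm (hT h.fst h.snd)).trans <|
    WithLp.norm_toLp_add_of_inner_eq_zero V _ _ hV hEX horth' h.fst h.snd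
end

section
/- Let {T_n} be a sequence of bounded operators on H converging *-strongly to T (i.e., T_n → T and T_n* → T* strongly), and suppose each T_n satisfies T_n*²T_n² − 2T_n*T_n + I = 0 and Δ_{T_n}(T_nT_n* − I)Δ_{T_n} = 0, where Δ_S = S*S − I. Then T satisfies T*²T² − 2T*T + I = 0 and Δ_T(TT* − I)Δ_T = 0. -/
open ContinuousLinearMap Filter

/-!
Strongly convergent sequences of operators on a Banach space are norm-bounded by
Banach–Steinhaus, so composition is jointly sequentially continuous for strong convergence.
Hence any noncommutative polynomial in `T n` and `(T n)*` converges strongly to the same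
polynomial in `S` and `S*` when `T n → S` *-strongly, and the limit of the zero sequence is zero.
-/

open Topology

namespace ContinuousLinearMap

variable {𝕜 E F G : Type*} [NontriviallyNormedField 𝕜]
  [NormedAddCommGroup E] [NormedSpace 𝕜 E] [NormedAddCommGroup F] [NormedSpace 𝕜 F]
  [NormedAddCommGroup G] [NormedSpace 𝕜 G]

def StrongTendsto (A : ℕ → E →L[𝕜] F) (A₀ : E →L[𝕜] F) : Prop :=
  ∀ x, Tendsto (fun n => A n x) atTop (𝓝 (A₀ x))

theorem strongTendsto_const (A₀ : E →L[𝕜] F) : StrongTendsto (fun _ => A₀) A₀ :=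
  fun _ => tendsto_const_nhds

namespace StrongTendsto

variable {A B : ℕ → E →L[𝕜] F} {A₀ B₀ : E →L[𝕜] F}

theorem exists_norm_le [CompleteSpace E] (hA : StrongTendsto A A₀) :
    ∃ C, ∀ n, ‖A n‖ ≤ C :=
  banach_steinhaus fun x => by
    obtain ⟨c, hc⟩ := (hA x).norm.bddAbove_range
    exact ⟨c, fun n => hc ⟨n, rfl⟩⟩

theorem tendsto_apply [CompleteSpace E] (hA : StrongTendsto A A₀) {x : ℕ → E} {y : E}
    (hx : Tendsto x atTop (𝓝 y)) : Tendsto (fun n => A n (x n)) atTop (𝓝 (A₀ y)) := by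
  obtain ⟨C, hC⟩ := hA.exists_norm_le
  have hsplit : ∀ n, A n (x n) = A n (x n - y) + A n y := fun n => by
    rw [map_sub, sub_add_cancel]
  have hsmall : Tendsto (fun n => A n (x n - y)) atTop (𝓝 0) := by
    refine squeeze_zero_norm (fun n => (A n).le_of_opNorm_le (hC n) _) ?_
    simpa using (tendsto_iff_norm_sub_tendsto_zero.mp hx).const_mul C
  simpa only [hsplit, zero_add] using hsmall.add (hA y)

theorem comp [CompleteSpace F] {A : ℕ → F →L[𝕜] G} {A₀ : F →L[𝕜] G}
    {B : ℕ → E →L[𝕜] F} {B₀ : E →L[𝕜] F} (hA : StrongTendsto A A₀) (hB : StrongTendsto B B₀) :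
    StrongTendsto (fun n => A n ∘L B n) (A₀ ∘L B₀) :=
  fun x => hA.tendsto_apply (hB x)

theorem add (hA : StrongTendsto A A₀) (hB : StrongTendsto B B₀) :
    StrongTendsto (fun n => A n + B n) (A₀ + B₀) :=
  fun x => (hA x).add (hB x)

theorem sub (hA : StrongTendsto A A₀) (hB : StrongTendsto B B₀) :
    StrongTendsto (fun n => A n - B n) (A₀ - B₀) :=
  fun x => (hA x).sub (hB x)

theorem const_smul (hA : StrongTendsto A A₀) (c : 𝕜) :
    StrongTendsto (fun n => c • A n) (c • A₀) :=
  fun x => (hA x).const_smul c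

theorem pow [CompleteSpace E] {A : ℕ → E →L[𝕜] E} {A₀ : E →L[𝕜] E}
    (hA : StrongTendsto A A₀) (k : ℕ) : StrongTendsto (fun n => A n ^ k) (A₀ ^ k) := by
  induction k with
  | zero => simpa only [pow_zero] using strongTendsto_const 1
  | succ k ih => simpa only [pow_succ, mul_def] using ih.comp hA

theorem unique (hA : StrongTendsto A A₀) (hA' : StrongTendsto A B₀) : A₀ = B₀ :=
  ext fun x => tendsto_nhds_unique (hA x) (hA' x)

end StrongTendsto

end ContinuousLinearMap

/-- The conditions (i) and (ii) of the algebraic characterization of Brownian unitaries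
pass to *-strong limits of sequences. -/
theorem brownian_conditions_star_strong_limit {H : Type*} [NormedAddCommGroup H]
    [InnerProductSpace ℂ H] [CompleteSpace H]
    (T : ℕ → H →L[ℂ] H) (S : H →L[ℂ] H)
    (hconv : ∀ h : H, Filter.Tendsto (fun n => T n h) Filter.atTop (nhds (S h)))
    (hconvAdj : ∀ h : H,
      Filter.Tendsto (fun n => adjoint (T n) h) Filter.atTop (nhds (adjoint S h)))
    (h1 : ∀ n, adjoint ((T n) ^ 2) ∘L (T n) ^ 2
        - (2 : ℂ) • (adjoint (T n) ∘L T n) + 1 = 0)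
    (h2 : ∀ n, (adjoint (T n) ∘L T n - 1) ∘L (T n ∘L adjoint (T n) - 1)
        ∘L (adjoint (T n) ∘L T n - 1) = 0) :
    adjoint (S ^ 2) ∘L S ^ 2 - (2 : ℂ) • (adjoint S ∘L S) + 1 = 0 ∧
      (adjoint S ∘L S - 1) ∘L (S ∘L adjoint S - 1) ∘L (adjoint S ∘L S - 1) = 0 := by
  have hT : StrongTendsto T S := hconv
  have hT' : StrongTendsto (fun n => adjoint (T n)) (adjoint S) := hconvAdj
  have hadj_pow (A : H →L[ℂ] H) : adjoint (A ^ 2) = adjoint A ^ 2 := by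
    simp only [← star_eq_adjoint, star_pow]
  have hΔ := (hT'.comp hT).sub (strongTendsto_const 1)
  constructor
  · have hlim := (((hT'.pow 2).comp (hT.pow 2)).sub ((hT'.comp hT).const_smul 2)).add
      (strongTendsto_const 1)
    simp only [← hadj_pow, h1] at hlim
    exact hlim.unique (strongTendsto_const 0)
  · have hlim := hΔ.comp (((hT.comp hT').sub (strongTendsto_const 1)).comp hΔ)
    simp only [h2] at hlim
    exact hlim.unique (strongTendsto_const 0)
end

section
/- If a sequence {T_n} of operators on H converges *-strongly to T, each T_n satisfies Δ_{T_n}² = σ_n² Δ_{T_n} with σ_n → σ in [0,∞), then Δ_T² = σ² Δ_T; in particular if σ = 0 then T is an isometry, and if σ > 0 and Δ_T ≠ 0 then σ^{-2} Δ_T is a nonzero orthogonal projection and cov(T) = σ. -/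
open ContinuousLinearMap Filter

private lemma tendsto_apply_seq {H : Type*} [NormedAddCommGroup H] [InnerProductSpace ℂ H]
    (A : ℕ → H →L[ℂ] H) (B : H →L[ℂ] H) (M : ℝ) (hM : ∀ n, ‖A n‖ ≤ M)
    (hA : ∀ y : H, Tendsto (fun n => A n y) atTop (nhds (B y)))
    (x : ℕ → H) (x0 : H) (hx : Tendsto x atTop (nhds x0)) :
    Tendsto (fun n => A n (x n)) atTop (nhds (B x0)) := by
  have h1 : Tendsto (fun n => A n (x n) - A n x0) atTop (nhds 0) := by
    apply squeeze_zero_norm (a := fun n => M * ‖x n - x0‖)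
    · intro n
      calc ‖A n (x n) - A n x0‖ = ‖A n (x n - x0)‖ := by rw [map_sub]
        _ ≤ ‖A n‖ * ‖x n - x0‖ := (A n).le_opNorm _
        _ ≤ M * ‖x n - x0‖ :=
            mul_le_mul_of_nonneg_right (hM n) (norm_nonneg _)
    · have : Tendsto (fun n => ‖x n - x0‖) atTop (nhds 0) :=
        tendsto_iff_norm_sub_tendsto_zero.mp hx
      simpa using this.const_mul M
  have := h1.add (hA x0)
  simpa using this

private lemma sq_zero_of_selfAdjoint {H : Type*} [NormedAddCommGroup H]
    [InnerProductSpace ℂ H] [CompleteSpace H]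
    (Δ : H →L[ℂ] H) (hsa : IsSelfAdjoint Δ) (h0 : Δ ∘L Δ = 0) : Δ = 0 := by
  have hadj : adjoint Δ = Δ := hsa
  have hn : ‖Δ‖ * ‖Δ‖ = 0 := by
    rw [← norm_adjoint_comp_self Δ, hadj]
    simp [show Δ.comp Δ = 0 from h0]
  have : ‖Δ‖ = 0 := by nlinarith [norm_nonneg Δ]
  exact norm_eq_zero.mp this

private lemma part3_aux {H : Type*} [NormedAddCommGroup H]
    [InnerProductSpace ℂ H] [CompleteSpace H]
    (Δ : H →L[ℂ] H) (σ : ℝ) (hσpos : 0 < σ)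
    (key : Δ ∘L Δ = ((σ : ℂ) ^ 2) • Δ) (hΔsa : IsSelfAdjoint Δ) (hΔne : Δ ≠ 0) :
    IsSelfAdjoint ((((σ : ℂ) ^ 2)⁻¹) • Δ) ∧
      ((((σ : ℂ) ^ 2)⁻¹) • Δ) ∘L ((((σ : ℂ) ^ 2)⁻¹) • Δ) = (((σ : ℂ) ^ 2)⁻¹) • Δ ∧
      (((σ : ℂ) ^ 2)⁻¹) • Δ ≠ 0 ∧ Real.sqrt ‖Δ‖ = σ := by
  have hσ2 : ((σ : ℂ) ^ 2) ≠ 0 := by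
    simp only [ne_eq, pow_eq_zero_iff, OfNat.ofNat_ne_zero, not_false_eq_true, and_true,
      Complex.ofReal_eq_zero]
    exact ne_of_gt hσpos
  have hsa : IsSelfAdjoint ((((σ : ℂ) ^ 2)⁻¹) • Δ) := by
    refine IsSelfAdjoint.smul ?_ hΔsa
    show star (((σ : ℂ) ^ 2)⁻¹) = _
    rw [star_inv₀, star_pow, Complex.star_def, Complex.conj_ofReal]
  have hidem : ((((σ : ℂ) ^ 2)⁻¹) • Δ) ∘L ((((σ : ℂ) ^ 2)⁻¹) • Δ)
      = (((σ : ℂ) ^ 2)⁻¹) • Δ := by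
    rw [smul_comp, comp_smul, key, smul_smul, smul_smul]
    congr 1
    field_simp
  have hne : (((σ : ℂ) ^ 2)⁻¹) • Δ ≠ 0 := smul_ne_zero (inv_ne_zero hσ2) hΔne
  refine ⟨hsa, hidem, hne, ?_⟩
  have hPadj : adjoint ((((σ : ℂ) ^ 2)⁻¹) • Δ) = (((σ : ℂ) ^ 2)⁻¹) • Δ := hsa
  have hnormP : ‖(((σ : ℂ) ^ 2)⁻¹) • Δ‖ = 1 := by
    have h1 : ‖(((σ : ℂ) ^ 2)⁻¹) • Δ‖ * ‖(((σ : ℂ) ^ 2)⁻¹) • Δ‖ = ‖(((σ : ℂ) ^ 2)⁻¹) • Δ‖ := by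
      rw [← norm_adjoint_comp_self ((((σ : ℂ) ^ 2)⁻¹) • Δ), hPadj, hidem]
    have h2 : ‖(((σ : ℂ) ^ 2)⁻¹) • Δ‖ ≠ 0 := norm_ne_zero_iff.mpr hne
    have h1' : ‖(((σ : ℂ) ^ 2)⁻¹) • Δ‖ * ‖(((σ : ℂ) ^ 2)⁻¹) • Δ‖
        = 1 * ‖(((σ : ℂ) ^ 2)⁻¹) • Δ‖ := by rw [h1, one_mul]
    exact mul_right_cancel₀ h2 h1'
  have hnormΔ : ‖Δ‖ = σ ^ 2 := by
    have hns : ‖(((σ : ℂ) ^ 2)⁻¹) • Δ‖ = ‖((σ : ℂ) ^ 2)⁻¹‖ * ‖Δ‖ := norm_smul _ _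
    rw [hnormP] at hns
    have hc : ‖((σ : ℂ) ^ 2)⁻¹‖ = (σ ^ 2)⁻¹ := by
      rw [norm_inv, ← Complex.ofReal_pow, Complex.norm_real,
        Real.norm_of_nonneg (by positivity)]
    rw [hc] at hns
    have hσ2' : (σ : ℝ) ^ 2 ≠ 0 := by positivity
    field_simp at hns
    linarith
  rw [hnormΔ, Real.sqrt_sq hσpos.le]

set_option maxHeartbeats 2000000 in
/-- Passing the projection relation Δ² = σ²Δ to *-strong limits. -/
theorem delta_relation_star_strong_limit {H : Type*} [NormedAddCommGroup H]
    [InnerProductSpace ℂ H] [CompleteSpace H]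
    (T : ℕ → H →L[ℂ] H) (S : H →L[ℂ] H) (σseq : ℕ → ℝ) (σ : ℝ)
    (hσseq : ∀ n, 0 ≤ σseq n) (hσ : 0 ≤ σ)
    (hlim : Filter.Tendsto σseq Filter.atTop (nhds σ))
    (hconv : ∀ h : H, Filter.Tendsto (fun n => T n h) Filter.atTop (nhds (S h)))
    (hconvAdj : ∀ h : H,
      Filter.Tendsto (fun n => adjoint (T n) h) Filter.atTop (nhds (adjoint S h)))
    (halg : ∀ n, (adjoint (T n) ∘L T n - 1) ∘L (adjoint (T n) ∘L T n - 1)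
        = ((σseq n : ℂ) ^ 2) • (adjoint (T n) ∘L T n - 1)) :
    (adjoint S ∘L S - 1) ∘L (adjoint S ∘L S - 1)
        = ((σ : ℂ) ^ 2) • (adjoint S ∘L S - 1) ∧
      (σ = 0 → adjoint S ∘L S = 1) ∧
      (0 < σ → adjoint S ∘L S - 1 ≠ 0 →
        IsSelfAdjoint ((((σ : ℂ) ^ 2)⁻¹) • (adjoint S ∘L S - 1)) ∧
        ((((σ : ℂ) ^ 2)⁻¹) • (adjoint S ∘L S - 1)) ∘L
            ((((σ : ℂ) ^ 2)⁻¹) • (adjoint S ∘L S - 1))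
          = (((σ : ℂ) ^ 2)⁻¹) • (adjoint S ∘L S - 1) ∧
        (((σ : ℂ) ^ 2)⁻¹) • (adjoint S ∘L S - 1) ≠ 0 ∧
        cov S = σ) := by
  -- uniform bound
  obtain ⟨M, hM⟩ : ∃ M, ∀ n, ‖T n‖ ≤ M := by
    apply banach_steinhaus
    intro x
    obtain ⟨C, hC⟩ := (hconv x).norm.bddAbove_range
    exact ⟨C, fun i => hC ⟨i, rfl⟩⟩
  have hMadj : ∀ n, ‖adjoint (T n)‖ ≤ M := fun n => by
    rw [LinearIsometryEquiv.norm_map]; exact hM n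
  have hMΔ : ∀ n, ‖adjoint (T n) ∘L T n - 1‖ ≤ M * M + 1 := by
    intro n
    calc ‖adjoint (T n) ∘L T n - 1‖
        ≤ ‖adjoint (T n) ∘L T n‖ + ‖(1 : H →L[ℂ] H)‖ := norm_sub_le _ _
      _ ≤ M * M + 1 := by
          have h1 : ‖adjoint (T n) ∘L T n‖ ≤ M * M :=
            le_trans (opNorm_comp_le _ _)
              (mul_le_mul (hMadj n) (hM n) (norm_nonneg _)
                (le_trans (norm_nonneg _) (hMadj 0)))
          have h2 : ‖(1 : H →L[ℂ] H)‖ ≤ 1 := norm_id_le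
          linarith
  -- pointwise convergence of Δn to Δ
  have hΔconv : ∀ h : H, Tendsto (fun n => (adjoint (T n) ∘L T n - 1) h) atTop
      (nhds ((adjoint S ∘L S - 1) h)) := by
    intro h
    have h1 : Tendsto (fun n => adjoint (T n) (T n h)) atTop (nhds (adjoint S (S h))) :=
      tendsto_apply_seq (fun n => adjoint (T n)) (adjoint S) M hMadj hconvAdj
        (fun n => T n h) (S h) (hconv h)
    have := h1.sub (tendsto_const_nhds (x := h))
    simpa using this
  -- main relation
  have key : (adjoint S ∘L S - 1) ∘L (adjoint S ∘L S - 1)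
      = ((σ : ℂ) ^ 2) • (adjoint S ∘L S - 1) := by
    ext h
    have h1 : Tendsto (fun n => (adjoint (T n) ∘L T n - 1) ((adjoint (T n) ∘L T n - 1) h))
        atTop (nhds ((adjoint S ∘L S - 1) ((adjoint S ∘L S - 1) h))) :=
      tendsto_apply_seq (fun n => adjoint (T n) ∘L T n - 1) (adjoint S ∘L S - 1)
        (M * M + 1) hMΔ hΔconv (fun n => (adjoint (T n) ∘L T n - 1) h) _ (hΔconv h)
    have h2 : Tendsto (fun n => ((σseq n : ℂ) ^ 2) • (adjoint (T n) ∘L T n - 1) h) atTop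
        (nhds (((σ : ℂ) ^ 2) • (adjoint S ∘L S - 1) h)) := by
      have hc : Tendsto (fun n => ((σseq n : ℂ) ^ 2)) atTop (nhds ((σ : ℂ) ^ 2)) :=
        ((Complex.continuous_ofReal.tendsto _).comp hlim).pow 2
      exact hc.smul (hΔconv h)
    have heq : (fun n => (adjoint (T n) ∘L T n - 1) ((adjoint (T n) ∘L T n - 1) h))
        = fun n => ((σseq n : ℂ) ^ 2) • (adjoint (T n) ∘L T n - 1) h := by
      funext n
      rw [← ContinuousLinearMap.comp_apply, halg n, ContinuousLinearMap.smul_apply]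
    rw [heq] at h1
    have := tendsto_nhds_unique h1 h2
    rw [ContinuousLinearMap.comp_apply, ContinuousLinearMap.smul_apply]
    exact this
  -- self-adjointness of Δ
  have hΔsa : IsSelfAdjoint (adjoint S ∘L S - 1) := by
    have h1 : IsSelfAdjoint (adjoint S ∘L S) := by
      rw [isSelfAdjoint_iff']
      simp [adjoint_comp, adjoint_adjoint]
    exact h1.sub (IsSelfAdjoint.one _)
  refine ⟨key, ?_, ?_⟩
  · intro h0
    subst h0
    have h00 : (adjoint S ∘L S - 1) ∘L (adjoint S ∘L S - 1) = 0 := by simpa using key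
    have := sq_zero_of_selfAdjoint _ hΔsa h00
    exact sub_eq_zero.mp this
  · intro hσpos hΔne
    obtain ⟨a, b, c, d⟩ := part3_aux (adjoint S ∘L S - 1) σ hσpos key hΔsa hΔne
    exact ⟨a, b, c, by rw [cov]; exact d⟩
end

section
/- Let σ_n > 0 with σ_n → 0, and let T_n = [[V, σ_n E],[0, U]] on H = H₁ ⊕ H₂, where V ∈ B(H₁), E ∈ B(H₂,H₁) are isometries with ran(V) ⊕ ran(E) = H₁ and U ∈ B(H₂) unitary. Then T_n converges in operator norm to V ⊕ U, which is a non-unitary isometry whenever V is non-unitary or E ≠ 0; in particular the norm limit of Brownian unitaries of positive covariance can fail to be a Brownian unitary. -/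
/-!
On `(x, y)` the difference `Tₙ - S` is `(σₙ E y, 0)`, whose norm is `σₙ ‖y‖` because `E` is
isometric; hence `‖Tₙ - S‖ = σₙ`. The limit `S = V ⊕ U` is an ℓ² sum of isometries, so it is
isometric, and a nonzero vector `E y` is orthogonal to the range of `V`, so `(E y, 0)` is not in
the range of `S`.
-/

open ContinuousLinearMap Filter

open WithLp

section BlockOperators

variable {𝕜 α β α' β' : Type*} [NontriviallyNormedField 𝕜]
  [NormedAddCommGroup α] [NormedSpace 𝕜 α] [NormedAddCommGroup β] [NormedSpace 𝕜 β]
  [NormedAddCommGroup α'] [NormedSpace 𝕜 α'] [NormedAddCommGroup β'] [NormedSpace 𝕜 β']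
  {p : ENNReal} [Fact (1 ≤ p)]

theorem ContinuousLinearMap.sub_apply_eq_toLp_of_upperTriangular
    {T S : WithLp p (α × β) →L[𝕜] WithLp p (α' × β')} {A : α → α'} {B : β → α'} {D : β → β'}
    (hT : ∀ x y, T (toLp p (x, y)) = toLp p (A x + B y, D y))
    (hS : ∀ x y, S (toLp p (x, y)) = toLp p (A x, D y)) (h : WithLp p (α × β)) :
    (T - S) h = toLp p (B h.snd, 0) := by
  rw [sub_apply, ← toLp_ofLp p h, hT, hS, ← toLp_sub, Prod.mk_sub_mk, add_sub_cancel_left,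
    sub_self]
  rfl

theorem ContinuousLinearMap.opNorm_eq_of_norm_apply_eq_mul_norm_snd [Nontrivial β]
    (K : WithLp p (α × β) →L[𝕜] α')
    {c : ℝ} (hc : 0 ≤ c) (hK : ∀ h, ‖K h‖ = c * ‖h.snd‖) : ‖K‖ = c := by
  refine le_antisymm (K.opNorm_le_bound hc fun h ↦ ?_) ?_
  · rw [hK]
    exact mul_le_mul_of_nonneg_left (WithLp.norm_snd_le α h) hc
  · obtain ⟨y, hy⟩ := exists_ne (0 : β)
    have hle := K.le_opNorm (toLp p (0, y))
    rw [hK, norm_toLp_snd, toLp_snd] at hle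
    exact le_of_mul_le_mul_right hle (norm_pos_iff.mpr hy)

end BlockOperators

section DiagonalOperators

variable {𝕜 α β α' β' : Type*} [Semiring 𝕜]
  [SeminormedAddCommGroup α] [Module 𝕜 α] [SeminormedAddCommGroup β] [Module 𝕜 β]
  [SeminormedAddCommGroup α'] [Module 𝕜 α'] [SeminormedAddCommGroup β'] [Module 𝕜 β']
  {p : ENNReal} [Fact (1 ≤ p)]

theorem norm_apply_eq_of_apply_toLp_eq (A : α →ₗᵢ[𝕜] α') (D : β →ₗᵢ[𝕜] β')
    {S : WithLp p (α × β) → WithLp p (α' × β')}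
    (hS : ∀ x y, S (toLp p (x, y)) = toLp p (A x, D y)) (h : WithLp p (α × β)) :
    ‖S h‖ = ‖h‖ := by
  rw [← toLp_ofLp p h, hS]
  exact (A.withLpProdMap p D).norm_map h

end DiagonalOperators

theorem not_surjective_of_apply_toLp_eq {p : ENNReal} {α β α' β' : Type*} [Zero α'] [Zero β']
    {S : WithLp p (α × β) → WithLp p (α' × β')} {A : α → α'} {D : β → β'}
    (hS : ∀ x y, S (toLp p (x, y)) = toLp p (A x, D y)) (hA : ¬ Function.Surjective A) :
    ¬ Function.Surjective S := by
  refine fun hsurj ↦ hA fun z ↦ ?_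
  obtain ⟨w, hw⟩ := hsurj (toLp p (z, 0))
  rw [← toLp_ofLp p w, hS] at hw
  exact ⟨_, congrArg (fun q ↦ (ofLp q).fst) hw⟩

open scoped InnerProductSpace in
theorem not_surjective_of_inner_eq_zero {𝕜 X E : Type*} [RCLike 𝕜] [NormedAddCommGroup E]
    [InnerProductSpace 𝕜 E] {A : X → E} {z : E} (hz : z ≠ 0) (horth : ∀ x, ⟪A x, z⟫_𝕜 = 0) :
    ¬ Function.Surjective A := fun hA ↦
  let ⟨x, hx⟩ := hA z
  hz (inner_self_eq_zero.mp (hx ▸ horth x))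

open scoped InnerProductSpace in
theorem brownian_norm_limit_nonunitary_isometry_general {H₁ H₂ : Type*}
    [NormedAddCommGroup H₁] [InnerProductSpace ℂ H₁]
    [NormedAddCommGroup H₂] [InnerProductSpace ℂ H₂] [CompleteSpace H₂] [Nontrivial H₂]
    (V : H₁ →L[ℂ] H₁) (E : H₂ →L[ℂ] H₁) (U : H₂ →L[ℂ] H₂)
    (hV : ∀ x : H₁, ‖V x‖ = ‖x‖) (hE : ∀ y : H₂, ‖E y‖ = ‖y‖)
    (horth : ∀ (x : H₁) (y : H₂), ⟪V x, E y⟫_ℂ = 0)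
    (hU1 : adjoint U ∘L U = 1)
    (σ : ℕ → ℝ) (hσpos : ∀ n, 0 < σ n) (hσlim : Filter.Tendsto σ Filter.atTop (nhds 0))
    (T : ℕ → WithLp 2 (H₁ × H₂) →L[ℂ] WithLp 2 (H₁ × H₂))
    (hT : ∀ (n : ℕ) (x : H₁) (y : H₂),
      T n ((WithLp.equiv 2 (H₁ × H₂)).symm (x, y)) =
        (WithLp.equiv 2 (H₁ × H₂)).symm (V x + σ n • E y, U y))
    (S : WithLp 2 (H₁ × H₂) →L[ℂ] WithLp 2 (H₁ × H₂))
    (hS : ∀ (x : H₁) (y : H₂),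
      S ((WithLp.equiv 2 (H₁ × H₂)).symm (x, y)) =
        (WithLp.equiv 2 (H₁ × H₂)).symm (V x, U y)) :
    (∀ n, ‖T n - S‖ = σ n) ∧
      Filter.Tendsto (fun n => ‖T n - S‖) Filter.atTop (nhds 0) ∧
      (∀ h, ‖S h‖ = ‖h‖) ∧
      (E ≠ 0 → ¬ Function.Surjective S) := by
  have hU : ∀ y, ‖U y‖ = ‖y‖ := U.norm_map_iff_adjoint_comp_self.mpr hU1
  have hdist : ∀ n, ‖T n - S‖ = σ n := fun n ↦
    (T n - S).opNorm_eq_of_norm_apply_eq_mul_norm_snd (hσpos n).le fun h ↦ by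
      rw [sub_apply_eq_toLp_of_upperTriangular (hT n) hS, norm_toLp_fst, norm_smul, hE,
        Real.norm_of_nonneg (hσpos n).le]
  refine ⟨hdist, by simpa only [hdist] using hσlim,
    norm_apply_eq_of_apply_toLp_eq ⟨V.toLinearMap, hV⟩ ⟨U.toLinearMap, hU⟩ hS, fun hE0 ↦ ?_⟩
  obtain ⟨y, hy⟩ := DFunLike.ne_iff.mp hE0
  exact not_surjective_of_apply_toLp_eq hS (not_surjective_of_inner_eq_zero hy (horth · y))

open scoped InnerProductSpace in
/-- Brownian unitaries of covariance σₙ → 0 converge in norm to the (non-unitary when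
E ≠ 0) isometry V ⊕ U. -/
theorem brownian_norm_limit_nonunitary_isometry {H₁ H₂ : Type*}
    [NormedAddCommGroup H₁] [InnerProductSpace ℂ H₁] [CompleteSpace H₁]
    [NormedAddCommGroup H₂] [InnerProductSpace ℂ H₂] [CompleteSpace H₂] [Nontrivial H₂]
    (V : H₁ →L[ℂ] H₁) (E : H₂ →L[ℂ] H₁) (U : H₂ →L[ℂ] H₂)
    (hV : ∀ x : H₁, ‖V x‖ = ‖x‖) (hE : ∀ y : H₂, ‖E y‖ = ‖y‖)
    (horth : ∀ (x : H₁) (y : H₂), ⟪V x, E y⟫_ℂ = 0)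
    (hspan : ∀ z : H₁, ∃ (x : H₁) (y : H₂), z = V x + E y)
    (hU1 : adjoint U ∘L U = 1) (hU2 : U ∘L adjoint U = 1)
    (σ : ℕ → ℝ) (hσpos : ∀ n, 0 < σ n) (hσlim : Filter.Tendsto σ Filter.atTop (nhds 0))
    (T : ℕ → WithLp 2 (H₁ × H₂) →L[ℂ] WithLp 2 (H₁ × H₂))
    (hT : ∀ (n : ℕ) (x : H₁) (y : H₂),
      T n ((WithLp.equiv 2 (H₁ × H₂)).symm (x, y)) =
        (WithLp.equiv 2 (H₁ × H₂)).symm (V x + σ n • E y, U y))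
    (S : WithLp 2 (H₁ × H₂) →L[ℂ] WithLp 2 (H₁ × H₂))
    (hS : ∀ (x : H₁) (y : H₂),
      S ((WithLp.equiv 2 (H₁ × H₂)).symm (x, y)) =
        (WithLp.equiv 2 (H₁ × H₂)).symm (V x, U y)) :
    (∀ n, ‖T n - S‖ = σ n) ∧
      Filter.Tendsto (fun n => ‖T n - S‖) Filter.atTop (nhds 0) ∧
      (∀ h, ‖S h‖ = ‖h‖) ∧
      (E ≠ 0 → ¬ Function.Surjective S) :=
  brownian_norm_limit_nonunitary_isometry_general V E U hV hE horth hU1 σ hσpos hσlim T hT S hS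
end

section
/- Let H ⊆ K be Hilbert spaces of the same orthogonal dimension, R ∈ B(K), and T ∈ B(H) with T ⊆ R (R extends T). Then there exists a net {T_τ} in B(H), indexed by the finite-dimensional subspaces of H ordered by inclusion, of operators each unitarily equivalent to R, converging strongly to T. -/
open ContinuousLinearMap Filter

/-!
Fix a unitary `e : H ≃ K`. For finite-dimensional `σ ≤ H`, the isometry `e x ↦ x` on `e(σ)`
extends to a unitary `W` of `K`: first inside the finite-dimensional space `e(σ) ⊔ σ`, then by the
identity on its orthogonal complement. So `U = W ∘ e : H ≃ K` fixes `σ` pointwise. Taking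
`σ = τ ⊔ T(τ)` gives `U⁻¹ R U x = U⁻¹ R x = U⁻¹ T x = T x` for `x ∈ τ`, so the net `U⁻¹ R U`
is eventually equal to `T x` at each `x`.
-/

section

variable {𝕜 E : Type*} [RCLike 𝕜] [NormedAddCommGroup E] [InnerProductSpace 𝕜 E]

noncomputable def LinearIsometryEquiv.extendOrthogonal {F : Submodule 𝕜 E}
    [F.HasOrthogonalProjection] (g : F ≃ₗᵢ[𝕜] F) : E ≃ₗᵢ[𝕜] E :=
  F.orthogonalDecomposition.trans <|
    (g.withLpProdCongr 2 (LinearIsometryEquiv.refl 𝕜 Fᗮ)).trans F.orthogonalDecomposition.symm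

theorem LinearIsometryEquiv.extendOrthogonal_apply_coe {F : Submodule 𝕜 E}
    [F.HasOrthogonalProjection] (g : F ≃ₗᵢ[𝕜] F) (x : F) :
    g.extendOrthogonal x = g x := by
  simp [extendOrthogonal]

theorem LinearIsometry.exists_linearIsometryEquiv_extend {S : Submodule 𝕜 E}
    [FiniteDimensional 𝕜 S] (L : S →ₗᵢ[𝕜] E) :
    ∃ W : E ≃ₗᵢ[𝕜] E, ∀ s : S, W s = L s := by
  set F := S ⊔ LinearMap.range L.toLinearMap
  have hSF : ∀ s : S, (s : E) ∈ F := fun s => Submodule.mem_sup_left s.2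
  have hLF : ∀ s, L s ∈ F := fun s => Submodule.mem_sup_right (LinearMap.mem_range_self _ s)
  let L' : S.comap F.subtype →ₗᵢ[𝕜] F :=
    { toLinearMap := (L.toLinearMap ∘ₗ F.subtype.restrict fun _ h => h).codRestrict F
        fun _ => hLF _
      norm_map' := fun _ => L.norm_map _ }
  let g : F ≃ₗᵢ[𝕜] F := L'.extend.toLinearIsometryEquiv rfl
  refine ⟨g.extendOrthogonal, fun s => ?_⟩
  rw [show (s : E) = ((⟨s, hSF s⟩ : F) : E) from rfl, g.extendOrthogonal_apply_coe]
  exact congrArg Subtype.val (L'.extend_apply ⟨⟨s, hSF s⟩, s.2⟩)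

theorem Submodule.exists_linearIsometryEquiv_eq_self_of_mem {H : Submodule 𝕜 E}
    (e : H ≃ₗᵢ[𝕜] E) (σ : Submodule 𝕜 H) [FiniteDimensional 𝕜 σ] :
    ∃ U : H ≃ₗᵢ[𝕜] E, ∀ x ∈ σ, U x = (x : E) := by
  let S := σ.map e.toLinearEquiv.toLinearMap
  obtain ⟨W, hW⟩ :=
    ((H.subtypeₗᵢ.comp e.symm.toLinearIsometry).comp S.subtypeₗᵢ).exists_linearIsometryEquiv_extend
  refine ⟨e.trans W, fun x hx => ?_⟩
  simpa using hW ⟨e x, Submodule.mem_map_of_mem hx⟩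

end

theorem net_unitarily_equivalent_strong_limit_general {K : Type*} [NormedAddCommGroup K]
    [InnerProductSpace ℂ K]
    (Hs : Submodule ℂ K)
    (hdim : Nonempty (Hs ≃ₗᵢ[ℂ] K))
    (R : K →L[ℂ] K) (T : Hs →L[ℂ] Hs)
    (hext : ∀ x : Hs, (T x : K) = R x) :
    ∃ Tnet : {p : Submodule ℂ Hs // FiniteDimensional ℂ p} → (Hs →L[ℂ] Hs),
      (∀ τ, ∃ U : Hs ≃ₗᵢ[ℂ] K, ∀ x : Hs, Tnet τ x = U.symm (R (U x))) ∧
      ∀ x : Hs, Filter.Tendsto (fun τ => Tnet τ x) Filter.atTop (nhds (T x)) := by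
  obtain ⟨e⟩ := hdim
  have hU (τ : {p : Submodule ℂ Hs // FiniteDimensional ℂ p}) :
      ∃ U : Hs ≃ₗᵢ[ℂ] K, ∀ x ∈ τ.1 ⊔ τ.1.map T.toLinearMap, U x = (x : K) :=
    have := τ.2
    Submodule.exists_linearIsometryEquiv_eq_self_of_mem e _
  choose U hU using hU
  refine ⟨fun τ => (U τ).symm.toContinuousLinearEquiv.toContinuousLinearMap ∘L R ∘L
    (U τ).toContinuousLinearEquiv.toContinuousLinearMap, fun τ => ⟨U τ, fun _ => rfl⟩,
    fun x => tendsto_nhds_of_eventually_eq ?_⟩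
  filter_upwards [eventually_ge_atTop ⟨Submodule.span ℂ {x}, inferInstance⟩] with τ hτ
  have hx : x ∈ τ.1 := Submodule.span_singleton_le_iff_mem x _ |>.mp hτ
  have hUx : U τ x = x := hU τ x (Submodule.mem_sup_left hx)
  have hUTx : U τ (T x) = T x := hU τ (T x) (Submodule.mem_sup_right (Submodule.mem_map_of_mem hx))
  change (U τ).symm (R (U τ x)) = T x
  rw [hUx, ← hext, ← hUTx, LinearIsometryEquiv.symm_apply_apply]

/-- Bishop-type approximation: if T on a closed subspace Hs of K (with dim Hs = dim K)
extends to R on K, then there is a net, indexed by the finite-dimensional subspaces of Hs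
ordered by inclusion, of operators unitarily equivalent to R converging strongly to T. -/
theorem net_unitarily_equivalent_strong_limit {K : Type*} [NormedAddCommGroup K]
    [InnerProductSpace ℂ K] [CompleteSpace K]
    (Hs : Submodule ℂ K) [CompleteSpace Hs]
    (hdim : Nonempty (Hs ≃ₗᵢ[ℂ] K))
    (R : K →L[ℂ] K) (T : Hs →L[ℂ] Hs)
    (hext : ∀ x : Hs, (T x : K) = R x) :
    ∃ Tnet : {p : Submodule ℂ Hs // FiniteDimensional ℂ p} → (Hs →L[ℂ] Hs),
      (∀ τ, ∃ U : Hs ≃ₗᵢ[ℂ] K, ∀ x : Hs, Tnet τ x = U.symm (R (U x))) ∧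
      ∀ x : Hs, Filter.Tendsto (fun τ => Tnet τ x) Filter.atTop (nhds (T x)) :=
  net_unitarily_equivalent_strong_limit_general Hs hdim R T hext
end
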